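/- arXiv:0810.5380 — 2 statements merged into one kernel-verified Lean document; each statement's English description precedes it below -/
import Mathlib

section
/- For every natural number N ≥ 17 and every real r with 0 < r < 1, the inequality 25·N²(N−4)²/(32·(9r^{4/3} − 4r³)²) − 8(N−2/3)(N−8/3)/(5r^{8/3}) − (12/5)(N²−1)/r ≥ 0 holds, provided N ≤ 30. -/
/-!
With `u = r^{1/3}` and `s = u⁵ ∈ (0, 1)`, the three terms have the common denominator
`160 u⁸ (9 - 4s)²`, with numerator `125 N²(N-4)² - (9-4s)²(256(N-2/3)(N-8/3) + 384(N²-1)s)`.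
Expanded in `t = N - 17`, every coefficient of this numerator is a polynomial in `s` that is
positive for `s ≤ 1` (the `s³` terms are absorbed by `s²(1 - s) ≥ 0`), so the inequality
holds for all real `N ≥ 17`.
-/

lemma nine_sub_four_mul_sq_mul_le {n s : ℝ} (hn : 17 ≤ n) (hs : s ≤ 1) :
    (9 - 4 * s) ^ 2 * (256 * (n - 2/3) * (n - 8/3) + 384 * (n ^ 2 - 1) * s)
      ≤ 125 * n ^ 2 * (n - 4) ^ 2 := by
  obtain ⟨t, ht, rfl⟩ : ∃ t, 0 ≤ t ∧ n = t + 17 := ⟨n - 17, by linarith, by ring⟩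
  have hcube : 0 ≤ s ^ 2 * (1 - s) := by have := sub_nonneg.2 hs; positivity
  nlinarith [hcube, mul_nonneg ht hcube, mul_nonneg (pow_nonneg ht 2) hcube,
    sq_nonneg (s - 4/9), mul_nonneg ht (sq_nonneg (s - 2/5)),
    mul_nonneg (pow_nonneg ht 2) (sq_nonneg (s - 1/3)), pow_nonneg ht 3, pow_nonneg ht 4]

lemma subsolution_ineq_pow {n u : ℝ} (hn : 17 ≤ n) (hu0 : 0 < u) (hu1 : u ≤ 1) :
    0 ≤ 25 * n ^ 2 * (n - 4) ^ 2 / (32 * (9 * u ^ 4 - 4 * (u ^ 3) ^ 3) ^ 2)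
        - 8 * (n - 2/3) * (n - 8/3) / (5 * u ^ 8)
        - (12/5) * (n ^ 2 - 1) / u ^ 3 := by
  have hs : u ^ 5 ≤ 1 := pow_le_one₀ hu0.le hu1
  have hpos : 0 < 9 - 4 * u ^ 5 := by linarith
  have hcommon : 25 * n ^ 2 * (n - 4) ^ 2 / (32 * (9 * u ^ 4 - 4 * (u ^ 3) ^ 3) ^ 2)
        - 8 * (n - 2/3) * (n - 8/3) / (5 * u ^ 8) - (12/5) * (n ^ 2 - 1) / u ^ 3
      = (125 * n ^ 2 * (n - 4) ^ 2 - (9 - 4 * u ^ 5) ^ 2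
          * (256 * (n - 2/3) * (n - 8/3) + 384 * (n ^ 2 - 1) * u ^ 5))
        / (160 * u ^ 8 * (9 - 4 * u ^ 5) ^ 2) := by
    rw [show 9 * u ^ 4 - 4 * (u ^ 3) ^ 3 = u ^ 4 * (9 - 4 * u ^ 5) by ring]
    field_simp
    ring
  rw [hcommon]
  exact div_nonneg (sub_nonneg.2 (nine_sub_four_mul_sq_mul_le hn hs)) (by positivity)

lemma rpow_div_three_eq_pow {r : ℝ} (hr : 0 ≤ r) (k : ℕ) :
    r ^ ((k : ℝ) / 3) = (r ^ ((1 : ℝ) / 3)) ^ k := by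
  rw [← Real.rpow_mul_natCast hr]
  ring_nf

theorem stmt3_general (N : ℕ) (hN : 17 ≤ N) (r : ℝ) (hr0 : 0 < r) (hr1 : r < 1) :
    0 ≤ 25 * (N : ℝ)^2 * ((N : ℝ) - 4)^2 / (32 * (9 * r ^ ((4:ℝ)/3) - 4 * r^3)^2)
        - 8 * ((N : ℝ) - 2/3) * ((N : ℝ) - 8/3) / (5 * r ^ ((8:ℝ)/3))
        - (12/5) * ((N : ℝ)^2 - 1) / r := by
  set u := r ^ ((1:ℝ)/3)
  have h4 : r ^ ((4:ℝ)/3) = u ^ 4 := by exact_mod_cast rpow_div_three_eq_pow hr0.le 4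
  have h8 : r ^ ((8:ℝ)/3) = u ^ 8 := by exact_mod_cast rpow_div_three_eq_pow hr0.le 8
  have h3 : r = u ^ 3 := by
    rw [← rpow_div_three_eq_pow hr0.le 3]
    norm_num
  have key := subsolution_ineq_pow (n := N) (u := u) (by exact_mod_cast hN) (by positivity)
    (Real.rpow_le_one hr0.le hr1.le (by norm_num))
  rwa [← h4, ← h8, ← h3] at key

/-- For `17 ≤ N ≤ 30` and `0 < r < 1`,
`25 N²(N-4)²/(32 (9 r^{4/3} - 4 r³)²) - 8(N-2/3)(N-8/3)/(5 r^{8/3}) - (12/5)(N²-1)/r ≥ 0`. -/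
theorem stmt3 (N : ℕ) (hN : 17 ≤ N) (hN' : N ≤ 30) (r : ℝ) (hr0 : 0 < r) (hr1 : r < 1) :
    0 ≤ 25 * (N : ℝ)^2 * ((N : ℝ) - 4)^2 / (32 * (9 * r ^ ((4:ℝ)/3) - 4 * r^3)^2)
        - 8 * ((N : ℝ) - 2/3) * ((N : ℝ) - 8/3) / (5 * r ^ ((8:ℝ)/3))
        - (12/5) * ((N : ℝ)^2 - 1) / r :=
  stmt3_general N hN r hr0 hr1
end

section
/- Suppose λ* > 0, N ≥ 5, and classical solutions u of Δ²u = λ/(1−u)² in B with 0 < u < 1 and u = ∂_ν u = 0 on ∂B exist exactly for 0 < λ < λ* (in the sense of the extremal parameter). Then for any first Dirichlet biharmonic eigenpair (ψ, ν₁) with ψ > 0 on B (Δ²ψ = ν₁ψ in B, ψ = ∂_νψ = 0 on ∂B), one has λ* ≤ sup_{0<u<1} ν₁·u·(1−u)² = 4ν₁/27. -/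
open Metric MeasureTheory Real Filter Topology
open scoped ContDiff

/-- The Laplacian of a scalar function on `ℝ^N`, as the trace of the second derivative. -/
noncomputable def lap {N : ℕ} (u : EuclideanSpace ℝ (Fin N) → ℝ)
    (x : EuclideanSpace ℝ (Fin N)) : ℝ :=
  ∑ i : Fin N, iteratedFDeriv ℝ 2 u x ![EuclideanSpace.single i 1, EuclideanSpace.single i 1]

namespace Stmt13Aux

variable {N : ℕ}

/-- partial derivative in direction `e i`. -/
noncomputable def Pd (i : Fin N) (f : EuclideanSpace ℝ (Fin N) → ℝ) :
    EuclideanSpace ℝ (Fin N) → ℝ :=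
  fun x => fderiv ℝ f x (EuclideanSpace.single i 1)

lemma contDiff_Pd {f : EuclideanSpace ℝ (Fin N) → ℝ} (hf : ContDiff ℝ ∞ f) (i : Fin N) :
    ContDiff ℝ ∞ (Pd i f) :=
  (hf.fderiv_right (by norm_num)).clm_apply contDiff_const

lemma lap_eq {f : EuclideanSpace ℝ (Fin N) → ℝ} (hf : ContDiff ℝ ∞ f) :
    lap f = fun x => ∑ i, Pd i (Pd i f) x := by
  funext x
  unfold lap
  refine Finset.sum_congr rfl fun i _ => ?_
  rw [iteratedFDeriv_two_apply]
  have hdf : ContDiff ℝ ∞ (fderiv ℝ f) := hf.fderiv_right (by norm_num)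
  have : Pd i (Pd i f) x
      = fderiv ℝ (fderiv ℝ f) x (EuclideanSpace.single i 1) (EuclideanSpace.single i 1) := by
    show fderiv ℝ (fun y => (fderiv ℝ f y) (EuclideanSpace.single i 1)) x _ = _
    rw [fderiv_clm_apply (hdf.differentiable (by norm_num) x) (differentiableAt_const _)]
    simp
  rw [this]
  simp

lemma Pd_mul {f g : EuclideanSpace ℝ (Fin N) → ℝ} (hf : Differentiable ℝ f)
    (hg : Differentiable ℝ g) (i : Fin N) (x : EuclideanSpace ℝ (Fin N)) :
    Pd i (fun y => f y * g y) x = f x * Pd i g x + g x * Pd i f x := by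
  unfold Pd
  rw [fderiv_fun_mul (hf x) (hg x)]
  simp

lemma Pd_sub {f g : EuclideanSpace ℝ (Fin N) → ℝ} (hf : Differentiable ℝ f)
    (hg : Differentiable ℝ g) (i : Fin N) (x : EuclideanSpace ℝ (Fin N)) :
    Pd i (fun y => f y - g y) x = Pd i f x - Pd i g x := by
  unfold Pd
  rw [fderiv_fun_sub (hf x) (hg x)]
  simp

lemma Pd_add {f g : EuclideanSpace ℝ (Fin N) → ℝ} (hf : Differentiable ℝ f)
    (hg : Differentiable ℝ g) (i : Fin N) (x : EuclideanSpace ℝ (Fin N)) :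
    Pd i (fun y => f y + g y) x = Pd i f x + Pd i g x := by
  unfold Pd
  rw [fderiv_fun_add (hf x) (hg x)]
  simp

lemma contDiff_lap {f : EuclideanSpace ℝ (Fin N) → ℝ} (hf : ContDiff ℝ ∞ f) :
    ContDiff ℝ ∞ (lap f) := by
  rw [lap_eq hf]
  exact ContDiff.sum fun i _ => contDiff_Pd (contDiff_Pd hf i) i

lemma integral_Pd_eq_zero {h : EuclideanSpace ℝ (Fin N) → ℝ} (hsm : ContDiff ℝ ∞ h)
    (hsupp : HasCompactSupport h) (i : Fin N) :
    ∫ x, Pd i h x = 0 := by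
  obtain ⟨C, hC⟩ := ContDiff.lipschitzWith_of_hasCompactSupport hsupp hsm (by norm_num)
  have key := LipschitzWith.integral_lineDeriv_mul_eq (μ := volume)
    (LipschitzWith.const (b := (1 : ℝ))) hC hsupp (EuclideanSpace.single i 1)
  have h0 : ∀ x : EuclideanSpace ℝ (Fin N),
      lineDeriv ℝ (fun _ => (1:ℝ)) x (EuclideanSpace.single i 1) = 0 := fun x => by
    rw [(differentiableAt_const (1:ℝ)).lineDeriv_eq_fderiv]; simp
  simp only [h0, zero_mul, integral_zero, mul_one] at key
  have : ∀ x, lineDeriv ℝ h x (-(EuclideanSpace.single i 1)) = -(Pd i h x) := by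
    intro x
    rw [(hsm.differentiable (by norm_num) x).lineDeriv_eq_fderiv]
    simp [Pd]
  rw [integral_congr_ae (Filter.Eventually.of_forall this)] at key
  rw [integral_neg] at key
  linarith

variable {u ψ : EuclideanSpace ℝ (Fin N) → ℝ}

lemma div_identity (hu : ContDiff ℝ ∞ u) (hψ : ContDiff ℝ ∞ ψ)
    (x : EuclideanSpace ℝ (Fin N)) :
    ∑ i, Pd i (fun y => ψ y * Pd i (lap u) y - lap u y * Pd i ψ y
        + lap ψ y * Pd i u y - u y * Pd i (lap ψ) y) x
      = ψ x * lap (lap u) x - u x * lap (lap ψ) x := by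
  have hL : ContDiff ℝ ∞ (lap u) := contDiff_lap hu
  have hM : ContDiff ℝ ∞ (lap ψ) := contDiff_lap hψ
  have du := hu.differentiable (by norm_num)
  have dψ := hψ.differentiable (by norm_num)
  have dL := hL.differentiable (by norm_num)
  have dM := hM.differentiable (by norm_num)
  have key : ∀ i : Fin N, Pd i (fun y => ψ y * Pd i (lap u) y - lap u y * Pd i ψ y
        + lap ψ y * Pd i u y - u y * Pd i (lap ψ) y) x
      = ψ x * Pd i (Pd i (lap u)) x - lap u x * Pd i (Pd i ψ) x
        + lap ψ x * Pd i (Pd i u) x - u x * Pd i (Pd i (lap ψ)) x := by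
    intro i
    have dPL := (contDiff_Pd hL i).differentiable (by norm_num)
    have dPψ := (contDiff_Pd hψ i).differentiable (by norm_num)
    have dPu := (contDiff_Pd hu i).differentiable (by norm_num)
    have dPM := (contDiff_Pd hM i).differentiable (by norm_num)
    rw [Pd_sub ((dψ.fun_mul dPL).fun_sub (dL.fun_mul dPψ) |>.fun_add (dM.fun_mul dPu)) (du.fun_mul dPM),
        Pd_add ((dψ.fun_mul dPL).fun_sub (dL.fun_mul dPψ)) (dM.fun_mul dPu),
        Pd_sub (dψ.fun_mul dPL) (dL.fun_mul dPψ),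
        Pd_mul dψ dPL, Pd_mul dL dPψ, Pd_mul dM dPu, Pd_mul du dPM]
    ring
  rw [Finset.sum_congr rfl fun i _ => key i]
  have eL := congrFun (lap_eq hL) x
  have eM := congrFun (lap_eq hM) x
  have eu := congrFun (lap_eq hu) x
  have eψ := congrFun (lap_eq hψ) x
  simp only [Finset.sum_sub_distrib, Finset.sum_add_distrib, ← Finset.mul_sum,
    ← eL, ← eM, ← eu, ← eψ]
  ring

/-- `g0 x = 1 - ‖x‖²`. -/
noncomputable def g0 : EuclideanSpace ℝ (Fin N) → ℝ := fun x => 1 - ‖x‖ ^ 2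

lemma contDiff_g0 : ContDiff ℝ ∞ (g0 (N := N)) :=
  contDiff_const.sub (contDiff_norm_sq ℝ)

/-- smooth cutoff `η_k`. -/
noncomputable def eta (k : ℕ) : EuclideanSpace ℝ (Fin N) → ℝ :=
  fun x => Real.smoothTransition ((k : ℝ) * g0 x)

lemma contDiff_eta (k : ℕ) : ContDiff ℝ ∞ (eta (N := N) k) :=
  Real.smoothTransition.contDiff.comp (contDiff_const.mul contDiff_g0)

lemma eta_nonneg (k : ℕ) (x : EuclideanSpace ℝ (Fin N)) : 0 ≤ eta k x :=
  Real.smoothTransition.nonneg _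

lemma eta_le_one (k : ℕ) (x : EuclideanSpace ℝ (Fin N)) : eta k x ≤ 1 :=
  Real.smoothTransition.le_one _

lemma eta_zero_of_one_le (k : ℕ) {x : EuclideanSpace ℝ (Fin N)} (hx : 1 ≤ ‖x‖) :
    eta k x = 0 := by
  apply Real.smoothTransition.zero_of_nonpos
  have h2 : g0 x ≤ 0 := by
    have : (1:ℝ) ≤ ‖x‖ ^ 2 := by nlinarith [norm_nonneg x]
    simp only [g0]; linarith
  exact mul_nonpos_of_nonneg_of_nonpos (Nat.cast_nonneg k) h2

lemma eta_hasCompactSupport (k : ℕ) : HasCompactSupport (eta (N := N) k) :=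
  HasCompactSupport.intro (isCompact_closedBall 0 1) fun x hx =>
    eta_zero_of_one_le k (by
      have : ¬ dist x 0 ≤ 1 := fun h => hx (Metric.mem_closedBall.2 h)
      rw [dist_zero_right] at this
      linarith [lt_of_not_ge this])

lemma Pd_eta_eq (k : ℕ) (i : Fin N) (x : EuclideanSpace ℝ (Fin N)) :
    Pd i (eta k) x = deriv Real.smoothTransition ((k : ℝ) * g0 x) *
      ((k : ℝ) * fderiv ℝ g0 x (EuclideanSpace.single i 1)) := by
  have hg : HasFDerivAt (fun y : EuclideanSpace ℝ (Fin N) => (k : ℝ) * g0 y)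
      ((k : ℝ) • fderiv ℝ g0 x) x :=
    ((contDiff_g0.differentiable (by norm_num) x).hasFDerivAt).const_mul _
  have hst : HasDerivAt Real.smoothTransition
      (deriv Real.smoothTransition ((k : ℝ) * g0 x)) ((k : ℝ) * g0 x) :=
    ((Real.smoothTransition.contDiff (n := (⊤ : ℕ∞))).differentiable (by norm_num) _).hasDerivAt
  have hcomp := hst.comp_hasFDerivAt x hg
  have he : eta (N := N) k = Real.smoothTransition ∘ fun y => (k : ℝ) * g0 y := rfl
  rw [Pd, he, hcomp.fderiv]
  simp [mul_comm, mul_assoc, mul_left_comm]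

lemma Pd_eta_zero_outer (k : ℕ) (i : Fin N) {x : EuclideanSpace ℝ (Fin N)}
    (hx : g0 x < 0) : Pd i (eta k) x = 0 := by
  have hopen : IsOpen {y : EuclideanSpace ℝ (Fin N) | g0 y < 0} :=
    isOpen_lt (contDiff_g0.continuous) continuous_const
  have hev : eta (N := N) k =ᶠ[nhds x] (fun _ => 0) := by
    filter_upwards [hopen.mem_nhds hx] with y hy
    exact Real.smoothTransition.zero_of_nonpos
      (mul_nonpos_of_nonneg_of_nonpos (Nat.cast_nonneg k) hy.le)
  rw [Pd, hev.fderiv_eq, fderiv_fun_const]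
  simp

lemma Pd_eta_zero_inner (k : ℕ) (i : Fin N) {x : EuclideanSpace ℝ (Fin N)}
    (hx : 1 < (k : ℝ) * g0 x) : Pd i (eta k) x = 0 := by
  have hopen : IsOpen {y : EuclideanSpace ℝ (Fin N) | 1 < (k : ℝ) * g0 y} :=
    isOpen_lt continuous_const (continuous_const.mul contDiff_g0.continuous)
  have hev : eta (N := N) k =ᶠ[nhds x] (fun _ => 1) := by
    filter_upwards [hopen.mem_nhds hx] with y hy
    exact Real.smoothTransition.one_of_one_le hy.le
  rw [Pd, hev.fderiv_eq, fderiv_fun_const]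
  simp

end Stmt13Aux

namespace Stmt13Aux

variable {N : ℕ}

/-- The vector field whose divergence is `ψ Δ²u - u Δ²ψ`. -/
noncomputable def FF (u ψ : EuclideanSpace ℝ (Fin N) → ℝ) (i : Fin N) :
    EuclideanSpace ℝ (Fin N) → ℝ :=
  fun y => ψ y * Pd i (lap u) y - lap u y * Pd i ψ y
      + lap ψ y * Pd i u y - u y * Pd i (lap ψ) y

lemma contDiff_FF {u ψ : EuclideanSpace ℝ (Fin N) → ℝ}
    (hu : ContDiff ℝ ∞ u) (hψ : ContDiff ℝ ∞ ψ) (i : Fin N) :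
    ContDiff ℝ ∞ (FF u ψ i) := by
  have hL := contDiff_lap hu
  have hM := contDiff_lap hψ
  exact (((hψ.mul (contDiff_Pd hL i)).sub (hL.mul (contDiff_Pd hψ i))).add
    (hM.mul (contDiff_Pd hu i))).sub (hu.mul (contDiff_Pd hM i))

lemma FF_sphere_zero {u ψ : EuclideanSpace ℝ (Fin N) → ℝ} {x : EuclideanSpace ℝ (Fin N)}
    (h1 : u x = 0) (h2 : fderiv ℝ u x = 0) (h3 : ψ x = 0) (h4 : fderiv ℝ ψ x = 0)
    (i : Fin N) : FF u ψ i x = 0 := by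
  simp [FF, Pd, h1, h2, h3, h4]

lemma div_FF {u ψ : EuclideanSpace ℝ (Fin N) → ℝ}
    (hu : ContDiff ℝ ∞ u) (hψ : ContDiff ℝ ∞ ψ) (x : EuclideanSpace ℝ (Fin N)) :
    ∑ i, Pd i (FF u ψ i) x = ψ x * lap (lap u) x - u x * lap (lap ψ) x :=
  div_identity hu hψ x

lemma null_level (hN : 0 < N) (c : ℝ) :
    volume {x : EuclideanSpace ℝ (Fin N) | ‖x‖ ^ 2 = c} = 0 := by
  haveI : Nontrivial (EuclideanSpace ℝ (Fin N)) := by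
    refine ⟨⟨0, EuclideanSpace.single ⟨0, hN⟩ 1, fun h => ?_⟩⟩
    have := congrArg norm h
    simp [EuclideanSpace.norm_single] at this
  rcases lt_or_ge c 0 with hc | hc
  · have he : {x : EuclideanSpace ℝ (Fin N) | ‖x‖ ^ 2 = c} = ∅ := by
      ext x
      simp only [Set.mem_setOf_eq, Set.mem_empty_iff_false, iff_false]
      intro h
      nlinarith [norm_nonneg x]
    rw [he]; exact measure_empty
  · have he : {x : EuclideanSpace ℝ (Fin N) | ‖x‖ ^ 2 = c} = Metric.sphere 0 (Real.sqrt c) := by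
      ext x
      simp only [Set.mem_setOf_eq, mem_sphere_iff_norm, sub_zero]
      constructor
      · intro h; rw [← h, Real.sqrt_sq (norm_nonneg x)]
      · intro h; rw [h, Real.sq_sqrt hc]
    rw [he]
    exact MeasureTheory.Measure.addHaar_sphere volume 0 _

end Stmt13Aux
namespace Stmt13Aux

variable {N : ℕ}

set_option maxHeartbeats 1000000 in
theorem main_bound (hNpos : 0 < N) {lam ν₁ : ℝ} (hlam : 0 < lam)
    {u ψ : EuclideanSpace ℝ (Fin N) → ℝ}
    (hu' : ContDiff ℝ ∞ u) (hψ' : ContDiff ℝ ∞ ψ)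
    (hueq : ∀ x ∈ ball (0 : EuclideanSpace ℝ (Fin N)) 1,
      lap (lap u) x = lam / (1 - u x) ^ 2)
    (hurange : ∀ x ∈ ball (0 : EuclideanSpace ℝ (Fin N)) 1, 0 < u x ∧ u x < 1)
    (hubc : ∀ x ∈ sphere (0 : EuclideanSpace ℝ (Fin N)) 1, u x = 0 ∧ fderiv ℝ u x = 0)
    (hψeq : ∀ x ∈ ball (0 : EuclideanSpace ℝ (Fin N)) 1, lap (lap ψ) x = ν₁ * ψ x)
    (hψpos : ∀ x ∈ ball (0 : EuclideanSpace ℝ (Fin N)) 1, 0 < ψ x)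
    (hψbc : ∀ x ∈ sphere (0 : EuclideanSpace ℝ (Fin N)) 1, ψ x = 0 ∧ fderiv ℝ ψ x = 0) :
    lam ≤ 4 * ν₁ / 27 := by
  classical
  set DD : EuclideanSpace ℝ (Fin N) → ℝ :=
    fun x => ψ x * lap (lap u) x - u x * lap (lap ψ) x with hDDdef
  have hDDc : Continuous DD :=
    (hψ'.continuous.mul (contDiff_lap (contDiff_lap hu')).continuous).sub
      (hu'.continuous.mul (contDiff_lap (contDiff_lap hψ')).continuous)
  have hFsm : ∀ i, ContDiff ℝ ∞ (FF u ψ i) := contDiff_FF hu' hψ'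
  -- Step A : integration by parts with cutoff
  have stepA : ∀ k : ℕ, (∫ x, eta k x * DD x) = - ∫ x, (∑ i, FF u ψ i x * Pd i (eta k) x) := by
    intro k
    have int1 : ∀ i : Fin N, Integrable (fun x => eta k x * Pd i (FF u ψ i) x) := fun i =>
      ((contDiff_eta k).continuous.mul (contDiff_Pd (hFsm i) i).continuous).integrable_of_hasCompactSupport
        ((eta_hasCompactSupport k).mul_right)
    have int2 : ∀ i : Fin N, Integrable (fun x => FF u ψ i x * Pd i (eta k) x) := fun i =>
      ((hFsm i).continuous.mul (contDiff_Pd (contDiff_eta k) i).continuous).integrable_of_hasCompactSupport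
        (((eta_hasCompactSupport k).fderiv_apply ℝ (EuclideanSpace.single i 1)).mul_left)
    have hzero : ∀ i : Fin N,
        (∫ x, (eta k x * Pd i (FF u ψ i) x + FF u ψ i x * Pd i (eta k) x)) = 0 := by
      intro i
      have h1 := integral_Pd_eq_zero ((contDiff_eta k).mul (hFsm i))
        ((eta_hasCompactSupport k).mul_right) i
      rw [← h1]
      refine integral_congr_ae (Filter.Eventually.of_forall fun x => ?_)
      exact (Pd_mul ((contDiff_eta k).differentiable (by norm_num))
        ((hFsm i).differentiable (by norm_num)) i x).symm
    have hsplit : ∀ i : Fin N,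
        (∫ x, (eta k x * Pd i (FF u ψ i) x + FF u ψ i x * Pd i (eta k) x))
        = (∫ x, eta k x * Pd i (FF u ψ i) x) + ∫ x, FF u ψ i x * Pd i (eta k) x :=
      fun i => integral_add (int1 i) (int2 i)
    have e1 : (∫ x, eta k x * DD x) = ∑ i : Fin N, ∫ x, eta k x * Pd i (FF u ψ i) x := by
      rw [← integral_finset_sum _ (fun i _ => int1 i)]
      refine integral_congr_ae (Filter.Eventually.of_forall fun x => ?_)
      show eta k x * DD x = ∑ i, eta k x * Pd i (FF u ψ i) x
      rw [← Finset.mul_sum, div_FF hu' hψ' x]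
    have e2 : (∫ x, (∑ i, FF u ψ i x * Pd i (eta k) x))
        = ∑ i : Fin N, ∫ x, FF u ψ i x * Pd i (eta k) x :=
      integral_finset_sum _ (fun i _ => int2 i)
    have hfin : (∫ x, eta k x * DD x) + (∫ x, (∑ i, FF u ψ i x * Pd i (eta k) x)) = 0 := by
      rw [e1, e2, ← Finset.sum_add_distrib]
      calc (∑ i : Fin N, ((∫ x, eta k x * Pd i (FF u ψ i) x)
              + ∫ x, FF u ψ i x * Pd i (eta k) x))
          = ∑ i : Fin N, ∫ x, (eta k x * Pd i (FF u ψ i) x + FF u ψ i x * Pd i (eta k) x) :=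
            Finset.sum_congr rfl fun i _ => (hsplit i).symm
        _ = 0 := by simp [hzero]
    linarith
  -- Lipschitz bounds for FF near the sphere
  have hFlip : ∀ i : Fin N, ∃ C : NNReal,
      LipschitzOnWith C (FF u ψ i) (closedBall (0 : EuclideanSpace ℝ (Fin N)) 1) := by
    intro i
    obtain ⟨c, hc⟩ := (isCompact_closedBall (0 : EuclideanSpace ℝ (Fin N)) 1).exists_bound_of_continuousOn
      (((hFsm i).continuous_fderiv (by norm_num)).continuousOn)
    refine ⟨⟨max c 0, le_max_right _ _⟩, Convex.lipschitzOnWith_of_nnnorm_fderiv_le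
      (fun x _ => ((hFsm i).differentiable (by norm_num)).differentiableAt)
      (fun x hx => ?_) (convex_closedBall _ _)⟩
    change ‖fderiv ℝ (FF u ψ i) x‖ ≤ max c 0
    exact (hc x hx).trans (le_max_left _ _)
  choose Cf hCf using hFlip
  have hFbound : ∀ (i : Fin N) (x : EuclideanSpace ℝ (Fin N)), ‖x‖ ≤ 1 →
      |FF u ψ i x| ≤ (Cf i : ℝ) * (1 - ‖x‖) := by
    intro i x hx
    by_cases hx0 : x = 0
    · subst hx0
      set y := EuclideanSpace.single (⟨0, hNpos⟩ : Fin N) (1 : ℝ) with hydef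
      have hny : ‖y‖ = 1 := by simp [hydef, EuclideanSpace.norm_single]
      have hmemy : y ∈ closedBall (0 : EuclideanSpace ℝ (Fin N)) 1 := by
        simp [Metric.mem_closedBall, dist_zero_right, hny]
      have hsy : y ∈ sphere (0 : EuclideanSpace ℝ (Fin N)) 1 := by
        simp [mem_sphere_iff_norm, hny]
      have hFy : FF u ψ i y = 0 :=
        FF_sphere_zero (hubc _ hsy).1 (hubc _ hsy).2 (hψbc _ hsy).1 (hψbc _ hsy).2 i
      have hd := (hCf i).dist_le_mul 0 (by simp) y hmemy
      rw [hFy, dist_zero_right, Real.norm_eq_abs] at hd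
      have hdy : dist (0 : EuclideanSpace ℝ (Fin N)) y = 1 := by
        rw [dist_comm, dist_zero_right, hny]
      rw [hdy, mul_one] at hd
      simpa using hd
    · have hr0 : 0 < ‖x‖ := norm_pos_iff.2 hx0
      set y := ‖x‖⁻¹ • x with hydef
      have hny : ‖y‖ = 1 := by
        rw [hydef, norm_smul, Real.norm_eq_abs, abs_of_nonneg (inv_nonneg.2 (norm_nonneg x)),
          inv_mul_cancel₀ hr0.ne']
      have hmemy : y ∈ closedBall (0 : EuclideanSpace ℝ (Fin N)) 1 := by
        simp [Metric.mem_closedBall, dist_zero_right, hny]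
      have hsy : y ∈ sphere (0 : EuclideanSpace ℝ (Fin N)) 1 := by
        simp [mem_sphere_iff_norm, hny]
      have hFy : FF u ψ i y = 0 :=
        FF_sphere_zero (hubc _ hsy).1 (hubc _ hsy).2 (hψbc _ hsy).1 (hψbc _ hsy).2 i
      have hmemx : x ∈ closedBall (0 : EuclideanSpace ℝ (Fin N)) 1 := by
        simp [Metric.mem_closedBall, dist_zero_right]; exact hx
      have hd := (hCf i).dist_le_mul x hmemx y hmemy
      have hinv1 : (1:ℝ) ≤ ‖x‖⁻¹ := by
        rw [le_inv_comm₀ one_pos hr0]; simpa using hx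
      have hxy : dist x y = 1 - ‖x‖ := by
        rw [dist_eq_norm]
        have hsub : x - y = (1 - ‖x‖⁻¹) • x := by rw [hydef, sub_smul, one_smul]
        rw [hsub, norm_smul, Real.norm_eq_abs, abs_of_nonpos (by linarith : (1:ℝ) - ‖x‖⁻¹ ≤ 0)]
        field_simp
        ring
      rw [hxy, hFy, dist_zero_right, Real.norm_eq_abs] at hd
      exact hd
  -- bounds for the cutoff derivative
  obtain ⟨Ms, hMs⟩ := (isCompact_Icc (a := (0:ℝ)) (b := 1)).exists_bound_of_continuousOn
    (((Real.smoothTransition.contDiff (n := (⊤ : ℕ∞))).continuous_deriv (by norm_num)).continuousOn)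
  set M := max Ms 0 with hMdef
  have hM0 : (0:ℝ) ≤ M := le_max_right _ _
  have hM : ∀ t ∈ Set.Icc (0:ℝ) 1, |deriv Real.smoothTransition t| ≤ M := fun t ht =>
    le_trans (by simpa [Real.norm_eq_abs] using hMs t ht) (le_max_left _ _)
  obtain ⟨Ks, hKs⟩ := (isCompact_closedBall (0 : EuclideanSpace ℝ (Fin N)) 1).exists_bound_of_continuousOn
    ((contDiff_g0.continuous_fderiv (by norm_num)).continuousOn)
  set K := max Ks 0 with hKdef
  have hK0 : (0:ℝ) ≤ K := le_max_right _ _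
  have hK : ∀ x : EuclideanSpace ℝ (Fin N), ‖x‖ ≤ 1 → ‖fderiv ℝ g0 x‖ ≤ K := fun x hx =>
    (hKs x (by simpa [Metric.mem_closedBall, dist_zero_right] using hx)).trans (le_max_left _ _)
  set Cbig := ∑ i : Fin N, (Cf i : ℝ) * (M * K) with hCbigdef
  have hCbig0 : (0:ℝ) ≤ Cbig :=
    Finset.sum_nonneg fun i _ => mul_nonneg (Cf i).2 (mul_nonneg hM0 hK0)
  have hnormlt' : ∀ {x : EuclideanSpace ℝ (Fin N)}, 0 < g0 x → ‖x‖ < 1 := by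
    intro x h
    simp only [g0] at h
    nlinarith [norm_nonneg x]
  -- the key middle-region bound
  have hGbound : ∀ (k : ℕ) (x : EuclideanSpace ℝ (Fin N)), 0 < g0 x →
      ((k+1:ℕ):ℝ) * g0 x ≤ 1 →
      |∑ i, FF u ψ i x * Pd i (eta (k+1)) x| ≤ Cbig := by
    intro k x hg0 hg1
    have hx1 : ‖x‖ < 1 := hnormlt' hg0
    rw [hCbigdef]
    refine le_trans (Finset.abs_sum_le_sum_abs _ _) (Finset.sum_le_sum fun i _ => ?_)
    have hF := hFbound i x hx1.le
    have hkc : (0:ℝ) ≤ ((k+1:ℕ):ℝ) := Nat.cast_nonneg _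
    have hPd : |Pd i (eta (k+1)) x| ≤ M * (((k+1:ℕ):ℝ) * K) := by
      rw [Pd_eta_eq, abs_mul]
      have ht : ((k+1:ℕ):ℝ) * g0 x ∈ Set.Icc (0:ℝ) 1 := ⟨mul_nonneg hkc hg0.le, hg1⟩
      have h2 : |((k+1:ℕ):ℝ) * fderiv ℝ g0 x (EuclideanSpace.single i 1)|
          ≤ ((k+1:ℕ):ℝ) * K := by
        rw [abs_mul, abs_of_nonneg hkc]
        refine mul_le_mul_of_nonneg_left ?_ hkc
        calc |fderiv ℝ g0 x (EuclideanSpace.single i 1)|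
            ≤ ‖fderiv ℝ g0 x‖ * ‖EuclideanSpace.single i (1:ℝ)‖ := by
              simpa [Real.norm_eq_abs] using (fderiv ℝ g0 x).le_opNorm (EuclideanSpace.single i 1)
          _ = ‖fderiv ℝ g0 x‖ := by simp [EuclideanSpace.norm_single]
          _ ≤ K := hK x hx1.le
      exact mul_le_mul (hM _ ht) h2 (abs_nonneg _) hM0
    rw [abs_mul]
    have h3 : ((k+1:ℕ):ℝ) * (1 - ‖x‖) ≤ 1 := by
      have h4 : (1 - ‖x‖) ≤ g0 x := by
        simp only [g0]
        nlinarith [norm_nonneg x]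
      nlinarith
    calc |FF u ψ i x| * |Pd i (eta (k+1)) x|
        ≤ ((Cf i : ℝ) * (1 - ‖x‖)) * (M * (((k+1:ℕ):ℝ) * K)) :=
          mul_le_mul hF hPd (abs_nonneg _)
            (mul_nonneg (Cf i).2 (by linarith))
      _ = ((Cf i : ℝ) * (M * K)) * (((k+1:ℕ):ℝ) * (1 - ‖x‖)) := by ring
      _ ≤ ((Cf i : ℝ) * (M * K)) * 1 :=
          mul_le_mul_of_nonneg_left h3 (mul_nonneg (Cf i).2 (mul_nonneg hM0 hK0))
      _ = (Cf i : ℝ) * (M * K) := mul_one _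
  -- Step B : the boundary term tends to zero
  have stepB : Filter.Tendsto (fun k : ℕ => ∫ x, (∑ i, FF u ψ i x * Pd i (eta (k+1)) x))
      atTop (nhds 0) := by
    have hg0null' : volume {x : EuclideanSpace ℝ (Fin N) | g0 x = 0} = 0 := by
      refine measure_mono_null (fun x hx => ?_) (null_level hNpos 1)
      simp only [Set.mem_setOf_eq, g0] at hx ⊢
      linarith
    have key := MeasureTheory.tendsto_integral_of_dominated_convergence
      (μ := volume)
      (F := fun (k : ℕ) (x : EuclideanSpace ℝ (Fin N)) => ∑ i, FF u ψ i x * Pd i (eta (k+1)) x)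
      (f := fun _ => (0:ℝ))
      (Set.indicator (closedBall (0 : EuclideanSpace ℝ (Fin N)) 1) (fun _ => Cbig))
      (fun k => (continuous_finset_sum _ fun i _ =>
        (hFsm i).continuous.mul (contDiff_Pd (contDiff_eta (k+1)) i).continuous).aestronglyMeasurable)
      ?_ ?_ ?_
    · simpa using key
    · rw [integrable_indicator_iff measurableSet_closedBall]
      exact integrableOn_const measure_closedBall_lt_top.ne
    · intro k
      have hlevelnull : volume {x : EuclideanSpace ℝ (Fin N) | ((k+1:ℕ):ℝ) * g0 x = 1} = 0 := by
        refine measure_mono_null (fun x hx => ?_)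
          (null_level hNpos (1 - 1/((k+1:ℕ):ℝ)))
        simp only [Set.mem_setOf_eq, g0] at hx ⊢
        have hk1 : (0:ℝ) < ((k+1:ℕ):ℝ) := by positivity
        field_simp at hx ⊢
        nlinarith [hx]
      have hae1 : ∀ᵐ x : EuclideanSpace ℝ (Fin N), g0 x ≠ 0 :=
        MeasureTheory.measure_eq_zero_iff_ae_notMem.mp hg0null'
      have hae2 : ∀ᵐ x : EuclideanSpace ℝ (Fin N), ((k+1:ℕ):ℝ) * g0 x ≠ 1 :=
        MeasureTheory.measure_eq_zero_iff_ae_notMem.mp hlevelnull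
      filter_upwards [hae1, hae2] with x hx1 hx2
      have hind0 : (0:ℝ) ≤ Set.indicator (closedBall (0 : EuclideanSpace ℝ (Fin N)) 1)
          (fun _ => Cbig) x := Set.indicator_nonneg (fun _ _ => hCbig0) x
      rcases lt_or_gt_of_ne hx1 with hneg | hpos
      · have : ∀ i : Fin N, Pd i (eta (k+1)) x = 0 := fun i => Pd_eta_zero_outer _ i hneg
        simp only [Real.norm_eq_abs, this, mul_zero, Finset.sum_const_zero, abs_zero]
        exact hind0
      · have hmem : x ∈ closedBall (0 : EuclideanSpace ℝ (Fin N)) 1 := by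
          simp only [Metric.mem_closedBall, dist_zero_right]
          exact (hnormlt' hpos).le
        rw [Real.norm_eq_abs, Set.indicator_of_mem hmem]
        rcases lt_or_gt_of_ne hx2 with hlt | hgt
        · exact hGbound k x hpos hlt.le
        · have : ∀ i : Fin N, Pd i (eta (k+1)) x = 0 := fun i => Pd_eta_zero_inner _ i hgt
          simp only [this, mul_zero, Finset.sum_const_zero, abs_zero]
          exact hCbig0
    · have hae1 : ∀ᵐ x : EuclideanSpace ℝ (Fin N), g0 x ≠ 0 :=
        MeasureTheory.measure_eq_zero_iff_ae_notMem.mp hg0null'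
      filter_upwards [hae1] with x hx1
      rcases lt_or_gt_of_ne hx1 with hneg | hpos
      · have hz : ∀ k : ℕ, (∑ i, FF u ψ i x * Pd i (eta (k+1)) x) = 0 := fun k => by
          simp only [fun i => Pd_eta_zero_outer (k+1) i hneg, mul_zero, Finset.sum_const_zero]
        simp only [hz]
        exact tendsto_const_nhds
      · refine Filter.Tendsto.congr' ?_ (tendsto_const_nhds (x := (0:ℝ)))
        obtain ⟨n, hn⟩ := exists_nat_gt (1 / g0 x)
        refine Filter.eventually_atTop.2 ⟨n, fun k hk => ?_⟩
        have h1 : (1:ℝ) < ((k+1:ℕ):ℝ) * g0 x := by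
          have hle : (n:ℝ) ≤ ((k+1:ℕ):ℝ) := by exact_mod_cast Nat.le_succ_of_le hk
          have := (div_lt_iff₀ hpos).1 (lt_of_lt_of_le hn hle)
          linarith
        simp only [fun i => Pd_eta_zero_inner (k+1) i h1, mul_zero, Finset.sum_const_zero]
  -- Step C : the cutoff integrals tend to the integral over the ball
  have hg0null : volume {x : EuclideanSpace ℝ (Fin N) | g0 x = 0} = 0 := by
    refine measure_mono_null (fun x hx => ?_) (null_level hNpos 1)
    simp only [Set.mem_setOf_eq, g0] at hx ⊢
    linarith
  have hg0ae : ∀ᵐ x : EuclideanSpace ℝ (Fin N), g0 x ≠ 0 :=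
    MeasureTheory.measure_eq_zero_iff_ae_notMem.mp hg0null
  have hnormlt : ∀ {x : EuclideanSpace ℝ (Fin N)}, 0 < g0 x → ‖x‖ < 1 := by
    intro x h
    simp only [g0] at h
    nlinarith [norm_nonneg x]
  have hnormgt : ∀ {x : EuclideanSpace ℝ (Fin N)}, g0 x < 0 → 1 ≤ ‖x‖ := by
    intro x h
    simp only [g0] at h
    nlinarith [norm_nonneg x]
  have hetaev : ∀ {x : EuclideanSpace ℝ (Fin N)}, 0 < g0 x →
      ∀ᶠ k : ℕ in atTop, eta (k+1) x = 1 := by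
    intro x hg
    obtain ⟨n, hn⟩ := exists_nat_gt (1 / g0 x)
    refine Filter.eventually_atTop.2 ⟨n, fun k hk => ?_⟩
    apply Real.smoothTransition.one_of_one_le
    have h1 : (1:ℝ) / g0 x < ((k+1:ℕ):ℝ) := by
      have : (n:ℝ) ≤ ((k+1:ℕ):ℝ) := by exact_mod_cast Nat.le_succ_of_le hk
      linarith
    rw [div_lt_iff₀ hg] at h1
    linarith
  have stepC : Filter.Tendsto (fun k : ℕ => ∫ x, eta (k+1) x * DD x)
      atTop (nhds (∫ x in ball (0 : EuclideanSpace ℝ (Fin N)) 1, DD x)) := by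
    rw [← integral_indicator measurableSet_ball]
    refine MeasureTheory.tendsto_integral_of_dominated_convergence
      (Set.indicator (closedBall (0 : EuclideanSpace ℝ (Fin N)) 1) (fun x => |DD x|))
      (fun k => ((contDiff_eta (k+1)).continuous.mul hDDc).aestronglyMeasurable) ?_ ?_ ?_
    · rw [integrable_indicator_iff measurableSet_closedBall]
      exact hDDc.abs.continuousOn.integrableOn_compact (isCompact_closedBall _ _)
    · intro k
      refine Filter.Eventually.of_forall fun x => ?_
      by_cases hx : x ∈ closedBall (0 : EuclideanSpace ℝ (Fin N)) 1
      · rw [Set.indicator_of_mem hx, Real.norm_eq_abs, abs_mul,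
          abs_of_nonneg (eta_nonneg _ _)]
        calc eta (k+1) x * |DD x| ≤ 1 * |DD x| :=
            mul_le_mul_of_nonneg_right (eta_le_one _ _) (abs_nonneg _)
          _ = |DD x| := one_mul _
      · rw [Set.indicator_of_notMem hx]
        have hxn : 1 ≤ ‖x‖ := by
          simp only [Metric.mem_closedBall, dist_zero_right, not_le] at hx
          linarith
        rw [eta_zero_of_one_le _ hxn]
        simp
    · filter_upwards [hg0ae] with x hx
      rcases lt_or_gt_of_ne hx with hneg | hpos
      · have h1 : 1 ≤ ‖x‖ := hnormgt hneg
        have hnb : x ∉ ball (0 : EuclideanSpace ℝ (Fin N)) 1 := by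
          simp [Metric.mem_ball, dist_zero_right]; linarith
        rw [Set.indicator_of_notMem hnb]
        simp only [eta_zero_of_one_le _ h1, zero_mul]
        exact tendsto_const_nhds
      · have hb : x ∈ ball (0 : EuclideanSpace ℝ (Fin N)) 1 := by
          simp [Metric.mem_ball, dist_zero_right, hnormlt hpos]
        rw [Set.indicator_of_mem hb]
        refine Filter.Tendsto.congr' ?_ (tendsto_const_nhds (x := DD x))
        filter_upwards [hetaev hpos] with k hk
        rw [hk, one_mul]
  -- combine : the integral of DD over the ball vanishes
  have hI0 : (∫ x in ball (0 : EuclideanSpace ℝ (Fin N)) 1, DD x) = 0 := by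
    have h1 : Filter.Tendsto (fun k : ℕ => ∫ x, eta (k+1) x * DD x) atTop (nhds 0) := by
      have : (fun k : ℕ => ∫ x, eta (k+1) x * DD x)
          = fun k : ℕ => - ∫ x, (∑ i, FF u ψ i x * Pd i (eta (k+1)) x) := by
        funext k; exact stepA (k+1)
      rw [this]
      simpa using stepB.neg
    exact tendsto_nhds_unique stepC h1
  -- Step D : find a point where DD ≤ 0
  have stepD : ∃ x₀ ∈ ball (0 : EuclideanSpace ℝ (Fin N)) 1, DD x₀ ≤ 0 := by
    by_contra hcon
    push_neg at hcon
    have hnn : 0 ≤ᵐ[volume.restrict (ball (0 : EuclideanSpace ℝ (Fin N)) 1)] DD := by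
      filter_upwards [ae_restrict_mem measurableSet_ball] with x hx
      exact (hcon x hx).le
    have hint : IntegrableOn DD (ball (0 : EuclideanSpace ℝ (Fin N)) 1) volume :=
      (hDDc.continuousOn.integrableOn_compact (isCompact_closedBall _ _)).mono_set
        ball_subset_closedBall
    have hpos : 0 < volume (Function.support DD ∩ ball (0 : EuclideanSpace ℝ (Fin N)) 1) :=
      lt_of_lt_of_le (measure_ball_pos volume 0 one_pos)
        (measure_mono fun x hx => ⟨(hcon x hx).ne', hx⟩)
    have := (MeasureTheory.setIntegral_pos_iff_support_of_nonneg_ae hnn hint).2 hpos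
    exact absurd hI0 this.ne'
  -- Step E : conclude
  obtain ⟨x₀, hx₀, hD0⟩ := stepD
  have ha := hurange x₀ hx₀
  have hp := hψpos x₀ hx₀
  have hkey : ψ x₀ * (lam / (1 - u x₀) ^ 2) - u x₀ * (ν₁ * ψ x₀) ≤ 0 := by
    have := hD0
    rw [hDDdef] at this
    simp only at this
    rw [hueq x₀ hx₀, hψeq x₀ hx₀] at this
    linarith
  set a := u x₀
  have ha1 : 0 < a := ha.1
  have ha2 : a < 1 := ha.2
  have hq : lam / (1 - a) ^ 2 ≤ ν₁ * a := by
    have h1 : (lam / (1 - a) ^ 2) * ψ x₀ ≤ (ν₁ * a) * ψ x₀ := by nlinarith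
    exact le_of_mul_le_mul_right h1 hp
  rw [div_le_iff₀ (pow_pos (by linarith : (0:ℝ) < 1 - a) 2)] at hq
  have hν₁ : 0 < ν₁ := by nlinarith [mul_pos ha1 (pow_pos (show (0:ℝ) < 1 - a by linarith) 2)]
  have h427 : a * (1 - a) ^ 2 ≤ 4 / 27 := by
    nlinarith [mul_nonneg (sq_nonneg (3*a-1)) (by linarith : (0:ℝ) ≤ 4 - 3*a)]
  nlinarith

end Stmt13Aux

open Metric in
/-- If `u` is a classical solution of `Δ²u = λ/(1-u)²` in the unit ball `B` with
`0 < u < 1` in `B` and clamped boundary conditions `u = ∂_ν u = 0` on `∂B`, and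
`(ψ, ν₁)` is a first Dirichlet biharmonic eigenpair with `ψ > 0` on `B`, then
`λ ≤ 4ν₁/27`; moreover `sup_{t ∈ (0,1)} t(1-t)² = 4/27`. -/
theorem stmt13 (N : ℕ) (hN : 5 ≤ N) (lam ν₁ : ℝ) (hlam : 0 < lam)
    (u ψ : EuclideanSpace ℝ (Fin N) → ℝ)
    (hu : ContDiff ℝ (⊤ : ℕ∞) u) (hψ : ContDiff ℝ (⊤ : ℕ∞) ψ)
    (hueq : ∀ x ∈ ball (0 : EuclideanSpace ℝ (Fin N)) 1,
      lap (lap u) x = lam / (1 - u x) ^ 2)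
    (hurange : ∀ x ∈ ball (0 : EuclideanSpace ℝ (Fin N)) 1, 0 < u x ∧ u x < 1)
    (hubc : ∀ x ∈ sphere (0 : EuclideanSpace ℝ (Fin N)) 1, u x = 0 ∧ fderiv ℝ u x = 0)
    (hψeq : ∀ x ∈ ball (0 : EuclideanSpace ℝ (Fin N)) 1, lap (lap ψ) x = ν₁ * ψ x)
    (hψpos : ∀ x ∈ ball (0 : EuclideanSpace ℝ (Fin N)) 1, 0 < ψ x)
    (hψbc : ∀ x ∈ sphere (0 : EuclideanSpace ℝ (Fin N)) 1, ψ x = 0 ∧ fderiv ℝ ψ x = 0) :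
    lam ≤ 4 * ν₁ / 27 ∧
    IsLUB ((fun t : ℝ => t * (1 - t) ^ 2) '' Set.Ioo (0 : ℝ) 1) (4/27) := by
  refine ⟨Stmt13Aux.main_bound (by omega) hlam (hu.of_le (by simp)) (hψ.of_le (by simp))
    hueq hurange hubc hψeq hψpos hψbc, ?_, ?_⟩
  · rintro y ⟨t, ⟨ht0, ht1⟩, rfl⟩
    simp only
    nlinarith [mul_nonneg (sq_nonneg (3*t-1)) (by linarith : (0:ℝ) ≤ 4 - 3*t)]
  · intro b hb
    have hmem : (4:ℝ)/27 ∈ (fun t : ℝ => t * (1 - t) ^ 2) '' Set.Ioo (0:ℝ) 1 :=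
      ⟨1/3, ⟨by norm_num, by norm_num⟩, by norm_num⟩
    exact hb hmem
end
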